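/- arXiv:2511.19763 — 4 statements merged into one kernel-verified Lean document; each statement's English description precedes it below -/
import Mathlib

section
/- Let p be a prime number. There exist integers a and b such that p = a² + a·b + b² if and only if p = 3 or p ≡ 1 (mod 3). -/
/-!
If `p ≡ 1 (mod 3)`, Cauchy's theorem gives a unit `c` of order 3 in `ZMod p`, so
`c² + c + 1 = 0` in `ZMod p`. Thue's pigeonhole argument gives integers `a, b`, not both zero,
with `|a|, |b| ≤ √p` and `a ≡ c b (mod p)`; then `p ∣ a² + ab + b² < 3p`, so the form equals
`p` or `2p`, and `2p` is excluded because the form is never `2` modulo `4`.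
Conversely, the form is never `2` modulo `3`.
-/

lemma Int.sq_add_mul_add_sq_emod_ne_two (a b : ℤ) {n : ℕ} (hn : n = 3 ∨ n = 4) :
    (a ^ 2 + a * b + b ^ 2) % n ≠ 2 := by
  intro h
  have h' := congrArg (Int.cast : ℤ → ZMod n) h
  rw [ZMod.intCast_mod] at h'
  push_cast at h'
  revert h'
  generalize (a : ZMod n) = x
  generalize (b : ZMod n) = y
  rcases hn with rfl | rfl <;> revert x y <;> decide

lemma ZMod.exists_sq_add_self_add_one_eq_zero {p : ℕ} [Fact p.Prime] (hp : p % 3 = 1) :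
    ∃ c : ZMod p, c ^ 2 + c + 1 = 0 := by
  have : Fact (Nat.Prime 3) := ⟨Nat.prime_three⟩
  have h3 : 3 ∣ Fintype.card (ZMod p)ˣ := by
    rw [ZMod.card_units]
    omega
  obtain ⟨u, hu⟩ := exists_prime_orderOf_dvd_card 3 h3
  have hroot : IsPrimitiveRoot (u : ZMod p) 3 :=
    IsPrimitiveRoot.coe_units_iff.mpr (hu ▸ IsPrimitiveRoot.orderOf u)
  have hsum := hroot.geom_sum_eq_zero (by norm_num)
  simp only [Finset.sum_range_succ, Finset.sum_range_zero] at hsum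
  exact ⟨u, by linear_combination hsum⟩

/-- Thue's lemma. -/
lemma ZMod.exists_abs_le_sqrt_intCast_eq_mul (n : ℕ) [NeZero n] (c : ZMod n) :
    ∃ a b : ℤ, (a ≠ 0 ∨ b ≠ 0) ∧ |a| ≤ n.sqrt ∧ |b| ≤ n.sqrt ∧ (a : ZMod n) = c * b := by
  set m := n.sqrt
  have hcard : (Finset.univ : Finset (ZMod n)).card <
      (Finset.range (m + 1) ×ˢ Finset.range (m + 1)).card := by
    rw [Finset.card_product, Finset.card_range, Finset.card_univ, ZMod.card]
    exact Nat.lt_succ_sqrt n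
  obtain ⟨⟨x₁, y₁⟩, h₁, ⟨x₂, y₂⟩, h₂, hne, heq⟩ :=
    Finset.exists_ne_map_eq_of_card_lt_of_maps_to hcard
      (f := fun q : ℕ × ℕ => (q.1 : ZMod n) - c * q.2) (fun _ _ => Finset.mem_univ _)
  simp only [Finset.mem_product, Finset.mem_range] at h₁ h₂
  refine ⟨(x₁ : ℤ) - x₂, (y₁ : ℤ) - y₂, ?_, ?_, ?_, ?_⟩
  · by_contra! h
    exact hne (Prod.ext (by omega) (by omega))
  · rw [abs_le]; omega
  · rw [abs_le]; omega
  · push_cast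
    linear_combination heq

lemma Nat.Prime.sqrt_sq_lt {p : ℕ} (hp : p.Prime) : p.sqrt ^ 2 < p := by
  refine (Nat.sqrt_le' p).lt_of_ne fun h => ?_
  rw [← h, sq, Nat.prime_mul_iff] at hp
  rcases hp with ⟨hm, hm1⟩ | ⟨hm, hm1⟩ <;> exact Nat.not_prime_one (hm1 ▸ hm)

variable {R : Type*} [CommRing R] [LinearOrder R] [IsStrictOrderedRing R]

lemma sq_add_mul_add_sq_pos {a b : R} (h : a ≠ 0 ∨ b ≠ 0) : 0 < a ^ 2 + a * b + b ^ 2 := by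
  rcases h with h | h
  · nlinarith [sq_pos_of_ne_zero h, sq_nonneg (a + 2 * b)]
  · nlinarith [sq_pos_of_ne_zero h, sq_nonneg (2 * a + b)]

lemma sq_add_mul_add_sq_le {a b m : R} (ha : |a| ≤ m) (hb : |b| ≤ m) :
    a ^ 2 + a * b + b ^ 2 ≤ 3 * m ^ 2 := by
  have h0 : 0 ≤ m := (abs_nonneg a).trans ha
  have hab : a * b ≤ m ^ 2 := by
    calc a * b ≤ |a| * |b| := by rw [← abs_mul]; exact le_abs_self _
      _ ≤ m * m := mul_le_mul ha hb (abs_nonneg b) h0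
      _ = m ^ 2 := (sq m).symm
  nlinarith [sq_le_sq' (abs_le.mp ha).1 (abs_le.mp ha).2, sq_le_sq' (abs_le.mp hb).1 (abs_le.mp hb).2]

lemma exists_sq_add_mul_add_sq_eq_or_eq_two_mul {p : ℕ} (hp : p.Prime) {c : ZMod p}
    (hc : c ^ 2 + c + 1 = 0) :
    ∃ a b : ℤ, a ^ 2 + a * b + b ^ 2 = p ∨ a ^ 2 + a * b + b ^ 2 = 2 * p := by
  have : Fact p.Prime := ⟨hp⟩
  obtain ⟨a, b, hab, ha, hb, hmod⟩ := ZMod.exists_abs_le_sqrt_intCast_eq_mul p c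
  refine ⟨a, b, ?_⟩
  have hdvd : (p : ℤ) ∣ a ^ 2 + a * b + b ^ 2 := by
    rw [← ZMod.intCast_zmod_eq_zero_iff_dvd]
    push_cast
    rw [hmod]
    linear_combination (b : ZMod p) ^ 2 * hc
  have hpos := sq_add_mul_add_sq_pos hab
  have hlt : a ^ 2 + a * b + b ^ 2 < 3 * p := by
    have : (p.sqrt : ℤ) ^ 2 < p := by exact_mod_cast hp.sqrt_sq_lt
    linarith [sq_add_mul_add_sq_le ha hb]
  obtain ⟨k, hk⟩ := hdvd
  have hp0 : (0 : ℤ) < p := by exact_mod_cast hp.pos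
  have hk0 : 0 < k := pos_of_mul_pos_right (hk ▸ hpos) hp0.le
  have hk3 : k < 3 := lt_of_mul_lt_mul_left (hk ▸ hlt.trans_eq (mul_comm _ _)) hp0.le
  interval_cases k
  · exact Or.inl (by rw [hk, mul_one])
  · exact Or.inr (by rw [hk, mul_comm])

theorem prime_iff_quadratic_form (p : ℕ) (hp : p.Prime) :
    (∃ a b : ℤ, (p : ℤ) = a ^ 2 + a * b + b ^ 2) ↔ (p = 3 ∨ p % 3 = 1) := by
  constructor
  · rintro ⟨a, b, hab⟩
    have hne : (p : ℤ) % 3 ≠ 2 := hab ▸ Int.sq_add_mul_add_sq_emod_ne_two a b (Or.inl rfl)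
    by_cases h3 : p % 3 = 0
    · exact Or.inl ((Nat.prime_dvd_prime_iff_eq Nat.prime_three hp).mp
        (Nat.dvd_of_mod_eq_zero h3)).symm
    · omega
  · rintro (rfl | h1)
    · exact ⟨1, 1, by norm_num⟩
    have : Fact p.Prime := ⟨hp⟩
    obtain ⟨c, hc⟩ := ZMod.exists_sq_add_self_add_one_eq_zero h1
    obtain ⟨a, b, hab | hab⟩ := exists_sq_add_mul_add_sq_eq_or_eq_two_mul hp hc
    · exact ⟨a, b, hab.symm⟩
    have hodd : p % 2 = 1 := hp.eq_two_or_odd.resolve_left (by omega)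
    have hne := Int.sq_add_mul_add_sq_emod_ne_two a b (n := 4) (Or.inr rfl)
    omega
end

section
/- Let p be a prime number. If x₁, y₁, x₂, y₂ are positive integers with p = x₁² + 3y₁² and p = x₂² + 3y₂², then x₁ = x₂ and y₁ = y₂. -/
/-!
If `p = a² + 3b² = c² + 3d²`, then `p ∣ (ad - bc)(ad + bc) = p(d² - b²)`, so the prime `p`
divides one of the two factors. Brahmagupta's identity
`p² = (ac + 3bd)² + 3(ad - bc)²` (and its variant with `d ↦ -d`) gives that factor absolute
value below `p`, so it vanishes. For natural numbers either way `ad = bc`, and then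
`p d² = p b²` fixes the representation.
-/

namespace Int

theorem eq_zero_of_dvd_of_sq_eq_sq_add_three_mul_sq {m w z : ℤ} (hm : 0 < m)
    (h : m ^ 2 = w ^ 2 + 3 * z ^ 2) (hz : m ∣ z) : z = 0 := by
  refine eq_zero_of_abs_lt_dvd hz ?_
  nlinarith [sq_nonneg w, sq_abs z, abs_nonneg z]

theorem mul_eq_mul_of_dvd_mul_sub_mul {p a b c d : ℤ} (hp : 0 < p)
    (h₁ : p = a ^ 2 + 3 * b ^ 2) (h₂ : p = c ^ 2 + 3 * d ^ 2) (hdvd : p ∣ a * d - b * c) :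
    a * d = b * c := by
  have hsq : p ^ 2 = (a * c + 3 * b * d) ^ 2 + 3 * (a * d - b * c) ^ 2 := by
    linear_combination p * h₁ + (a ^ 2 + 3 * b ^ 2) * h₂
  linarith [eq_zero_of_dvd_of_sq_eq_sq_add_three_mul_sq hp hsq hdvd]

theorem mul_eq_mul_or_mul_eq_neg_mul_of_prime {p a b c d : ℤ} (hp : Prime p)
    (h₁ : p = a ^ 2 + 3 * b ^ 2) (h₂ : p = c ^ 2 + 3 * d ^ 2) :
    a * d = b * c ∨ a * d = -(b * c) := by
  have hpos : 0 < p := lt_of_le_of_ne (by rw [h₁]; positivity) hp.ne_zero.symm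
  have h₂' : p = c ^ 2 + 3 * (-d) ^ 2 := by rw [h₂, neg_sq]
  have hdvd : p ∣ (a * d - b * c) * (a * -d - b * c) :=
    ⟨b ^ 2 - d ^ 2, by linear_combination d ^ 2 * h₁ - b ^ 2 * h₂⟩
  rcases hp.dvd_or_dvd hdvd with h | h
  · exact .inl (mul_eq_mul_of_dvd_mul_sub_mul hpos h₁ h₂ h)
  · have := mul_eq_mul_of_dvd_mul_sub_mul hpos h₁ h₂' h
    exact .inr (by linarith)

end Int

namespace Nat

theorem mul_eq_mul_of_prime_eq_sq_add_three_mul_sq {p a b c d : ℕ} (hp : p.Prime)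
    (h₁ : p = a ^ 2 + 3 * b ^ 2) (h₂ : p = c ^ 2 + 3 * d ^ 2) : a * d = b * c := by
  rcases Int.mul_eq_mul_or_mul_eq_neg_mul_of_prime (Nat.prime_iff_prime_int.mp hp)
      (a := a) (b := b) (c := c) (d := d) (by exact_mod_cast h₁) (by exact_mod_cast h₂)
      with h | h
  · exact_mod_cast h
  · have h0 : ((a * d + b * c : ℕ) : ℤ) = 0 := by push_cast; linarith
    rw [Nat.cast_eq_zero, Nat.add_eq_zero_iff] at h0
    rw [h0.1, h0.2]

theorem eq_and_eq_of_sq_add_three_mul_sq_of_mul_eq_mul {p a b c d : ℕ} (hp : p ≠ 0)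
    (h₁ : p = a ^ 2 + 3 * b ^ 2) (h₂ : p = c ^ 2 + 3 * d ^ 2) (hcross : a * d = b * c) :
    a = c ∧ b = d := by
  have hsq : p * d ^ 2 = p * b ^ 2 := by
    calc p * d ^ 2 = (a * d) ^ 2 + 3 * b ^ 2 * d ^ 2 := by rw [h₁]; ring
      _ = (b * c) ^ 2 + 3 * b ^ 2 * d ^ 2 := by rw [hcross]
      _ = p * b ^ 2 := by rw [h₂]; ring
  have hb : b = d :=
    (Nat.pow_left_injective two_ne_zero (mul_left_cancel₀ hp hsq)).symm
  subst hb
  exact ⟨Nat.pow_left_injective two_ne_zero (Nat.add_right_cancel (h₁.symm.trans h₂)), rfl⟩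

end Nat

theorem unique_rep_x_sq_add_three_y_sq_general (p : ℕ) (hp : p.Prime)
    (x₁ y₁ x₂ y₂ : ℕ)
    (h₁ : p = x₁ ^ 2 + 3 * y₁ ^ 2) (h₂ : p = x₂ ^ 2 + 3 * y₂ ^ 2) :
    x₁ = x₂ ∧ y₁ = y₂ :=
  Nat.eq_and_eq_of_sq_add_three_mul_sq_of_mul_eq_mul hp.ne_zero h₁ h₂
    (Nat.mul_eq_mul_of_prime_eq_sq_add_three_mul_sq hp h₁ h₂)

theorem unique_rep_x_sq_add_three_y_sq (p : ℕ) (hp : p.Prime)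
    (x₁ y₁ x₂ y₂ : ℕ) (hx₁ : 0 < x₁) (hy₁ : 0 < y₁) (hx₂ : 0 < x₂) (hy₂ : 0 < y₂)
    (h₁ : p = x₁ ^ 2 + 3 * y₁ ^ 2) (h₂ : p = x₂ ^ 2 + 3 * y₂ ^ 2) :
    x₁ = x₂ ∧ y₁ = y₂ :=
  unique_rep_x_sq_add_three_y_sq_general p hp x₁ y₁ x₂ y₂ h₁ h₂
end

section
/- Let p be a prime number with p > 3 and p ≡ 1 (mod 3). Then there exists exactly one triple (x, y, z) of positive integers satisfying 3x² + y·z = p and y = z. -/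
/-!
A primitive cube root of unity `ω` modulo `p` gives `c = 2ω + 1` with `c² = -3`. Thue's lemma
yields small `x, y` with `x ≡ c y`, so `p ∣ x² + 3y² < 4p`; the quotient `2` is impossible
modulo `4` and the quotient `3` forces `3 ∣ x`, so `p = a² + 3b²`. For uniqueness, two
representations `p = a² + n b² = c² + n d²` give `p ∣ (ad - bc)(ad + bc)`, and Brahmagupta's
identity makes both factors smaller than `p` in absolute value, so `ad = bc`, whence `b = d`.
-/

theorem IsPrimitiveRoot.two_mul_add_one_sq {R : Type*} [CommRing R] [IsDomain R] {ζ : R}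
    (hζ : IsPrimitiveRoot ζ 3) : (2 * ζ + 1) ^ 2 = -3 := by
  have h := hζ.geom_sum_eq_zero (by norm_num)
  simp only [Finset.sum_range_succ, Finset.sum_range_zero] at h
  linear_combination 4 * h

theorem ZMod.exists_sq_eq_neg_three {p : ℕ} [Fact p.Prime] (h : p % 3 = 1) :
    ∃ c : ZMod p, c ^ 2 = -3 := by
  have : Fact (Nat.Prime 3) := ⟨Nat.prime_three⟩
  obtain ⟨u, hu⟩ := exists_prime_orderOf_dvd_card (G := (ZMod p)ˣ) 3
    (by rw [ZMod.card_units p]; omega)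
  have hζ : IsPrimitiveRoot (u : ZMod p) 3 :=
    IsPrimitiveRoot.coe_units_iff.mpr (hu ▸ IsPrimitiveRoot.orderOf u)
  exact ⟨_, hζ.two_mul_add_one_sq⟩

/-- Thue's lemma, by pigeonhole on `x - c * y` for `0 ≤ x, y ≤ √n`. -/
theorem ZMod.exists_natAbs_le_sqrt_intCast_eq_mul {n : ℕ} [NeZero n] (c : ZMod n) :
    ∃ x y : ℤ, (x ≠ 0 ∨ y ≠ 0) ∧ x.natAbs ≤ n.sqrt ∧ y.natAbs ≤ n.sqrt ∧
      (x : ZMod n) = c * y := by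
  set s := Finset.range (n.sqrt + 1) ×ˢ Finset.range (n.sqrt + 1)
  have hcard : (Finset.univ : Finset (ZMod n)).card < s.card := by
    rw [Finset.card_product, Finset.card_range, Finset.card_univ, ZMod.card]
    exact Nat.lt_succ_sqrt n
  obtain ⟨a, ha, b, hb, hab, hfab⟩ := Finset.exists_ne_map_eq_of_card_lt_of_maps_to hcard
    (f := fun q : ℕ × ℕ => (q.1 : ZMod n) - c * q.2) (fun _ _ => Finset.mem_univ _)
  simp only [s, Finset.mem_product, Finset.mem_range] at ha hb
  refine ⟨(a.1 : ℤ) - b.1, (a.2 : ℤ) - b.2, ?_, by omega, by omega, ?_⟩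
  · by_contra! h0
    exact hab (Prod.ext (by omega) (by omega))
  · push_cast
    linear_combination hfab

theorem Int.sq_add_three_mul_sq_ne_two_mul {x y k : ℤ} (hk : Odd k) :
    x ^ 2 + 3 * y ^ 2 ≠ 2 * k := by
  obtain ⟨j, rfl⟩ := hk
  intro h
  have h4 : (x : ZMod 4) ^ 2 + 3 * (y : ZMod 4) ^ 2 = 2 := by
    have hfour : (4 : ZMod 4) = 0 := rfl
    have := congrArg (Int.cast : ℤ → ZMod 4) h
    push_cast at this
    linear_combination this + (j : ZMod 4) * hfour
  revert h4
  generalize (x : ZMod 4) = u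
  generalize (y : ZMod 4) = v
  revert u v
  decide

theorem Int.exists_sq_add_three_mul_sq_eq_of_dvd {p x y : ℤ} (hp : Odd p)
    (hdvd : p ∣ x ^ 2 + 3 * y ^ 2) (hpos : 0 < x ^ 2 + 3 * y ^ 2)
    (hlt : x ^ 2 + 3 * y ^ 2 < 4 * p) : ∃ a b : ℤ, a ^ 2 + 3 * b ^ 2 = p := by
  obtain ⟨m, hm⟩ := hdvd
  have hm0 : 0 < m := by nlinarith
  have hm4 : m < 4 := by nlinarith
  interval_cases m
  · exact ⟨x, y, by linarith⟩
  · exact absurd (by linarith) (Int.sq_add_three_mul_sq_ne_two_mul (x := x) (y := y) hp)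
  · obtain ⟨x', rfl⟩ : (3 : ℤ) ∣ x :=
      Int.prime_three.dvd_of_dvd_pow (n := 2) ⟨p - y ^ 2, by linarith⟩
    exact ⟨y, x', by linarith⟩

theorem Nat.Prime.exists_sq_add_three_mul_sq_eq {p : ℕ} (hp : p.Prime) (h : p % 3 = 1) :
    ∃ a b : ℕ, a ^ 2 + 3 * b ^ 2 = p := by
  have : Fact p.Prime := ⟨hp⟩
  obtain ⟨c, hc⟩ := ZMod.exists_sq_eq_neg_three h
  obtain ⟨x, y, hxy, hx, hy, hxc⟩ := ZMod.exists_natAbs_le_sqrt_intCast_eq_mul c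
  have hsqrt : p.sqrt * p.sqrt < p :=
    (Nat.sqrt_le p).lt_of_ne fun h => hp.prime.not_isSquare ⟨_, h.symm⟩
  have hsq_lt : ∀ z : ℤ, z.natAbs ≤ p.sqrt → z ^ 2 < p := fun z hz => by
    rw [← Int.natAbs_sq, sq]
    exact_mod_cast (Nat.mul_le_mul hz hz).trans_lt hsqrt
  have hdvd : (p : ℤ) ∣ x ^ 2 + 3 * y ^ 2 := by
    rw [← ZMod.intCast_zmod_eq_zero_iff_dvd]
    push_cast
    linear_combination (y : ZMod p) ^ 2 * hc + (x + c * y) * hxc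
  have hodd : Odd (p : ℤ) := by
    rw [Int.odd_coe_nat, Nat.odd_iff]
    rcases hp.eq_two_or_odd with rfl | h2 <;> omega
  obtain ⟨a, b, hab⟩ := Int.exists_sq_add_three_mul_sq_eq_of_dvd hodd hdvd
    (by rcases hxy with h0 | h0 <;> positivity) (by linarith [hsq_lt x hx, hsq_lt y hy])
  exact ⟨a.natAbs, b.natAbs, by zify; simpa only [sq_abs] using hab⟩

theorem Nat.Prime.eq_of_sq_add_mul_sq_eq {p n a b c d : ℕ} (hp : p.Prime) (hn : 2 ≤ n)
    (h₁ : a ^ 2 + n * b ^ 2 = p) (h₂ : c ^ 2 + n * d ^ 2 = p) : a = c ∧ b = d := by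
  have hadbc : a * d = b * c := by
    zify at h₁ h₂ ⊢
    have hdvd : (p : ℤ) ∣ (a * d - b * c) * (a * d + b * c) :=
      ⟨d ^ 2 - b ^ 2, by linear_combination d ^ 2 * h₁ - b ^ 2 * h₂⟩
    -- Brahmagupta's identity: `p ^ 2 = f ^ 2 + n * e ^ 2` for `e = a * d ± b * c`.
    have hlt : ∀ e f : ℤ, (p : ℤ) ^ 2 = f ^ 2 + n * e ^ 2 → |e| < p := fun e f he =>
      abs_lt_of_sq_lt_sq (by nlinarith [sq_nonneg f, sq_nonneg e, hp.pos]) (by positivity)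
    rcases (Nat.prime_iff_prime_int.mp hp).dvd_mul.mp hdvd with h | h
    · have := Int.eq_zero_of_abs_lt_dvd h (hlt _ (a * c + n * b * d) (by
        linear_combination -(c ^ 2 + n * d ^ 2) * h₁ - p * h₂))
      linarith
    · have := Int.eq_zero_of_abs_lt_dvd h (hlt _ (a * c - n * b * d) (by
        linear_combination -(c ^ 2 + n * d ^ 2) * h₁ - p * h₂))
      nlinarith [mul_nonneg (Int.natCast_nonneg a) (Int.natCast_nonneg d),
        mul_nonneg (Int.natCast_nonneg b) (Int.natCast_nonneg c)]
  have hbd : b = d := by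
    have : d ^ 2 * p = b ^ 2 * p := by
      nth_rewrite 1 [← h₁]
      rw [← h₂]
      linear_combination (a * d + b * c) * hadbc
    exact (Nat.pow_left_injective two_ne_zero (Nat.eq_of_mul_eq_mul_right hp.pos this)).symm
  subst hbd
  exact ⟨Nat.pow_left_injective two_ne_zero (by linarith), rfl⟩

theorem unique_symmetric_triple_general (p : ℕ) (hp : p.Prime) (h : p % 3 = 1) :
    ∃! t : ℕ × ℕ × ℕ, 0 < t.1 ∧ 0 < t.2.1 ∧ 0 < t.2.2 ∧
      3 * t.1 ^ 2 + t.2.1 * t.2.2 = p ∧ t.2.1 = t.2.2 := by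
  obtain ⟨y, x, hxy⟩ := hp.exists_sq_add_three_mul_sq_eq h
  have hx : 0 < x := Nat.pos_of_ne_zero fun hx =>
    hp.prime.not_isSquare ⟨y, by simpa [hx, sq] using hxy.symm⟩
  have hy : 0 < y := Nat.pos_of_ne_zero fun hy => by subst hy; omega
  refine ⟨(x, y, y), ⟨hx, hy, hy, by linarith [sq y], rfl⟩, ?_⟩
  rintro ⟨u, v, w⟩ ⟨-, -, -, huv, rfl : v = w⟩
  obtain ⟨rfl, rfl⟩ := hp.eq_of_sq_add_mul_sq_eq (n := 3) (by norm_num)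
    (by linarith [sq v] : v ^ 2 + 3 * u ^ 2 = p) hxy
  rfl

theorem unique_symmetric_triple (p : ℕ) (hp : p.Prime) (hp3 : 3 < p) (h : p % 3 = 1) :
    ∃! t : ℕ × ℕ × ℕ, 0 < t.1 ∧ 0 < t.2.1 ∧ 0 < t.2.2 ∧
      3 * t.1 ^ 2 + t.2.1 * t.2.2 = p ∧ t.2.1 = t.2.2 :=
  unique_symmetric_triple_general p hp h
end

section
/- Let p be a prime number and let x, z be positive integers with p = 3x² + 2x·z. Then x = 1 and z = (p − 3)/2 (equivalently, 2z = p − 3). -/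
theorem fixed_point_S8_general (p : ℕ) (hp : p.Prime) (x z : ℕ)
    (h : p = 3 * x ^ 2 + 2 * x * z) : x = 1 ∧ 2 * z = p - 3 := by
  have hfactor : p = x * (3 * x + 2 * z) := by rw [h]; ring
  rw [hfactor, Nat.prime_mul_iff] at hp
  have hx : x = 1 := by
    rcases hp with ⟨hx_prime, hcofactor⟩ | ⟨_, hx⟩
    · have := hx_prime.two_le
      omega
    · exact hx
  subst hx
  omega

theorem fixed_point_S8 (p : ℕ) (hp : p.Prime) (x z : ℕ) (hx : 0 < x) (hz : 0 < z)
    (h : p = 3 * x ^ 2 + 2 * x * z) : x = 1 ∧ 2 * z = p - 3 :=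
  fixed_point_S8_general p hp x z h
end
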